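/- Let F : ℝ^d → ℝ be differentiable with ‖∇F(x) − ∇F(y)‖ ≤ L‖x − y‖ for all x, y ∈ ℝ^d (L > 0), let X ⊆ ℝ^d be nonempty, closed and convex, set ρ = 4L and let 0 < η ≤ 2/(9L). Fix x ∈ X, and let g be a square-integrable random vector with E[g] = ∇F(x) and E‖g − ∇F(x)‖² ≤ σ². Set x⁺ := Π_X(x − η g) and x̂ := prox_{Φ/ρ}(x), where Φ := F + δ_X. Then E‖x⁺ − x̂‖² ≤ (1 − ηρ)‖x − x̂‖² + σ² η². -/

import Mathlib

/-! The prox point `x̂` satisfies the variational inequality `⟪∇F x̂ + ρ (x̂ - x), y - x̂⟫ ≥ 0` on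
`X`, which says that `x̂` is the projection of `x̂ - η (∇F x̂ + ρ (x̂ - x))` onto `X`. Since
the projection is nonexpansive, `‖x⁺ - x̂‖ ≤ ‖u + η (∇F x - g)‖` with the deterministic vector
`u = (1 - ηρ)(x - x̂) - η (∇F x - ∇F x̂)`. The noise has mean zero, so taking expectations gives
`‖u‖² + η² σ²`, and `‖u‖ ≤ (1 - 3ηL) ‖x - x̂‖` with `(1 - 3ηL)² ≤ 1 - 4ηL` as long as
`ηL ≤ 2/9`. -/

open MeasureTheory
open scoped RealInnerProductSpace

noncomputable section

/-- `q` is the Euclidean projection of `p` onto `X`. -/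
def IsProjection {d : ℕ} (X : Set (EuclideanSpace ℝ (Fin d))) (p q : EuclideanSpace ℝ (Fin d)) : Prop :=
  q ∈ X ∧ ∀ y ∈ X, ‖q - p‖ ≤ ‖y - p‖

/-- `q = prox_{Φ/ρ}(p)`, i.e. `q` minimizes `y ↦ F y + ρ/2 ‖y - p‖²` over `X`. -/
def IsProx {d : ℕ} (X : Set (EuclideanSpace ℝ (Fin d))) (F : EuclideanSpace ℝ (Fin d) → ℝ) (ρ : ℝ) (p q : EuclideanSpace ℝ (Fin d)) : Prop :=
  q ∈ X ∧ ∀ y ∈ X, F q + ρ / 2 * ‖q - p‖ ^ 2 ≤ F y + ρ / 2 * ‖y - p‖ ^ 2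

section

variable {E : Type*} [NormedAddCommGroup E] [InnerProductSpace ℝ E]

theorem IsMinOn.hasFDerivAt_apply_sub_nonneg {X : Set E} (hX : Convex ℝ X) {f : E → ℝ}
    {f' : E →L[ℝ] ℝ} {q y : E} (hq : q ∈ X) (hmin : IsMinOn f X q) (hf : HasFDerivAt f f' q)
    (hy : y ∈ X) : 0 ≤ f' (y - q) :=
  hmin.localize.hasFDerivWithinAt_nonneg hf.hasFDerivWithinAt
    (sub_mem_posTangentConeAt_of_segment_subset (hX.segment_subset hq hy))

theorem norm_smul_sub_smul_sub_le {F' : E → E} {L : ℝ}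
    (hLip : ∀ u v, ‖F' u - F' v‖ ≤ L * ‖u - v‖) {s η : ℝ} (hs : 0 ≤ s) (hη : 0 ≤ η) (a b : E) :
    ‖s • (a - b) - η • (F' a - F' b)‖ ≤ (s + η * L) * ‖a - b‖ :=
  calc ‖s • (a - b) - η • (F' a - F' b)‖ ≤ ‖s • (a - b)‖ + ‖η • (F' a - F' b)‖ := norm_sub_le _ _
    _ = s * ‖a - b‖ + η * ‖F' a - F' b‖ := by
      rw [norm_smul, norm_smul, Real.norm_of_nonneg hs, Real.norm_of_nonneg hη]
    _ ≤ (s + η * L) * ‖a - b‖ := by nlinarith [hLip a b]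

theorem norm_sub_le_of_inner_nonpos {p₁ p₂ q₁ q₂ : E} (h₁ : ⟪p₁ - q₁, q₂ - q₁⟫ ≤ 0)
    (h₂ : ⟪p₂ - q₂, q₁ - q₂⟫ ≤ 0) : ‖q₁ - q₂‖ ≤ ‖p₁ - p₂‖ := by
  have hsq : ‖q₁ - q₂‖ ^ 2 ≤ ⟪p₁ - p₂, q₁ - q₂⟫ := by
    have h₁' : ⟪p₁ - q₁, q₂ - q₁⟫ = -⟪p₁ - q₁, q₁ - q₂⟫ := by
      rw [← inner_neg_right, neg_sub]
    have hsplit : p₁ - p₂ = (p₁ - q₁) - (p₂ - q₂) + (q₁ - q₂) := by abel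
    rw [hsplit, inner_add_left, inner_sub_left, real_inner_self_eq_norm_sq]
    linarith
  have hcs := real_inner_le_norm (p₁ - p₂) (q₁ - q₂)
  nlinarith [norm_nonneg (q₁ - q₂), norm_nonneg (p₁ - p₂)]

end

section Euclidean

variable {d : ℕ} {X : Set (EuclideanSpace ℝ (Fin d))}

theorem IsProjection.inner_sub_nonpos (hX : Convex ℝ X) {p q y : EuclideanSpace ℝ (Fin d)}
    (h : IsProjection X p q) (hy : y ∈ X) : ⟪p - q, y - q⟫ ≤ 0 := by
  have hmin : IsMinOn (fun z => ‖z - p‖ ^ 2) X q := fun z hz =>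
    pow_le_pow_left₀ (norm_nonneg _) (h.2 z hz) 2
  have := hmin.hasFDerivAt_apply_sub_nonneg hX h.1
    ((hasFDerivAt_id q).sub_const p).norm_sq hy
  simp only [id_eq, ContinuousLinearMap.comp_id, smul_apply, coe_innerSL_apply, nsmul_eq_mul,
    Nat.cast_ofNat] at this
  rw [← neg_sub q p, inner_neg_left]
  linarith

theorem IsProx.inner_sub_nonneg (hX : Convex ℝ X) {F : EuclideanSpace ℝ (Fin d) → ℝ}
    {ρ : ℝ} {p q y G : EuclideanSpace ℝ (Fin d)} (hF : HasGradientAt F G q)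
    (h : IsProx X F ρ p q) (hy : y ∈ X) : 0 ≤ ⟪G + ρ • (q - p), y - q⟫ := by
  have hmin : IsMinOn (fun z => F z + ρ / 2 * ‖z - p‖ ^ 2) X q := h.2
  have := hmin.hasFDerivAt_apply_sub_nonneg hX h.1
    (hF.hasFDerivAt.add (((hasFDerivAt_id q).sub_const p).norm_sq.const_mul (ρ / 2))) hy
  simp only [id_eq, ContinuousLinearMap.comp_id, add_apply, InnerProductSpace.toDual_apply_apply, smul_apply,
    coe_innerSL_apply, nsmul_eq_mul, Nat.cast_ofNat, smul_eq_mul] at this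
  rw [inner_add_left, real_inner_smul_left]
  linarith

theorem IsProx.norm_sub_le_of_isProjection (hX : Convex ℝ X) {F : EuclideanSpace ℝ (Fin d) → ℝ}
    {ρ η : ℝ} {p q z z' G : EuclideanSpace ℝ (Fin d)} (hF : HasGradientAt F G q)
    (hq : IsProx X F ρ p q) (hz : IsProjection X z z') (hη : 0 ≤ η) :
    ‖z' - q‖ ≤ ‖z - (q - η • (G + ρ • (q - p)))‖ := by
  refine norm_sub_le_of_inner_nonpos (hz.inner_sub_nonpos hX hq.1) ?_
  rw [sub_sub_cancel_left, inner_neg_left, real_inner_smul_left, neg_nonpos]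
  exact mul_nonneg hη (hq.inner_sub_nonneg hX hF hz.1)

end Euclidean

theorem integral_norm_add_sq_of_integral_eq_zero {Ω E : Type*} [MeasurableSpace Ω]
    {μ : Measure Ω} [IsProbabilityMeasure μ] [NormedAddCommGroup E] [InnerProductSpace ℝ E]
    [CompleteSpace E] {ξ : Ω → E} (hξ : MemLp ξ 2 μ) (hξ0 : ∫ ω, ξ ω ∂μ = 0) (u : E) :
    ∫ ω, ‖u + ξ ω‖ ^ 2 ∂μ = ‖u‖ ^ 2 + ∫ ω, ‖ξ ω‖ ^ 2 ∂μ := by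
  have hint : Integrable ξ μ := hξ.integrable one_le_two
  calc ∫ ω, ‖u + ξ ω‖ ^ 2 ∂μ = ∫ ω, ‖u‖ ^ 2 + 2 * ⟪u, ξ ω⟫ + ‖ξ ω‖ ^ 2 ∂μ := by
        simp_rw [norm_add_sq_real]
    _ = ‖u‖ ^ 2 + 2 * ⟪u, ∫ ω, ξ ω ∂μ⟫ + ∫ ω, ‖ξ ω‖ ^ 2 ∂μ := by
        have hcross : Integrable (fun ω => 2 * ⟪u, ξ ω⟫) μ := (hint.const_inner u).const_mul 2
        rw [integral_add (by fun_prop) hξ.norm.integrable_sq, integral_add (by fun_prop) hcross,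
          integral_const, integral_const_mul, integral_inner hint]
        simp
    _ = ‖u‖ ^ 2 + ∫ ω, ‖ξ ω‖ ^ 2 ∂μ := by rw [hξ0, inner_zero_right, mul_zero, add_zero]

theorem psgd_one_step_contraction_general {d : ℕ}
    {Ω : Type} [MeasurableSpace Ω] (μ : Measure Ω) [IsProbabilityMeasure μ]
    (X : Set (EuclideanSpace ℝ (Fin d))) (hXcvx : Convex ℝ X)
    (F : EuclideanSpace ℝ (Fin d) → ℝ) (F' : EuclideanSpace ℝ (Fin d) → EuclideanSpace ℝ (Fin d)) (L ρ η σ : ℝ) (hL : 0 < L)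
    (hgrad : ∀ y, HasGradientAt F (F' y) y)
    (hLip : ∀ u v : EuclideanSpace ℝ (Fin d), ‖F' u - F' v‖ ≤ L * ‖u - v‖)
    (hρ : ρ = 4 * L) (hη0 : 0 < η) (hη : η ≤ 2 / (9 * L))
    (x : EuclideanSpace ℝ (Fin d))
    (g : Ω → EuclideanSpace ℝ (Fin d)) (hg2 : MemLp g 2 μ)
    (hmean : (∫ ω, g ω ∂μ) = F' x)
    (hvarg : (∫ ω, ‖g ω - F' x‖ ^ 2 ∂μ) ≤ σ ^ 2)
    (xplus : Ω → EuclideanSpace ℝ (Fin d)) (hxplus : ∀ ω, IsProjection X (x - η • g ω) (xplus ω))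
    (xhat : EuclideanSpace ℝ (Fin d)) (hxhat : IsProx X F ρ x xhat) :
    (∫ ω, ‖xplus ω - xhat‖ ^ 2 ∂μ) ≤ (1 - η * ρ) * ‖x - xhat‖ ^ 2 + σ ^ 2 * η ^ 2 := by
  have hηL : η * L ≤ 2 / 9 := by rw [le_div_iff₀ (by positivity)] at hη; linarith
  set u := (1 - η * ρ) • (x - xhat) - η • (F' x - F' xhat)
  set ξ : Ω → EuclideanSpace ℝ (Fin d) := fun ω => η • (F' x - g ω)
  have hstep : ∀ ω, ‖xplus ω - xhat‖ ≤ ‖u + ξ ω‖ := fun ω =>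
    (hxhat.norm_sub_le_of_isProjection hXcvx (hgrad xhat) (hxplus ω) hη0.le).trans_eq
      (congrArg norm (by module))
  have hξ : MemLp ξ 2 μ := ((memLp_const _).sub hg2).const_smul η
  have hξ0 : ∫ ω, ξ ω ∂μ = 0 := by
    rw [integral_smul, integral_sub (integrable_const _) (hg2.integrable one_le_two), hmean]
    simp
  have hnoise : ∫ ω, ‖ξ ω‖ ^ 2 ∂μ ≤ η ^ 2 * σ ^ 2 := by
    simp_rw [ξ, norm_smul, mul_pow, norm_sub_rev (F' x), Real.norm_eq_abs, sq_abs]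
    rw [integral_const_mul]
    gcongr
  have hu : ‖u‖ ≤ (1 - 3 * (η * L)) * ‖x - xhat‖ :=
    (norm_smul_sub_smul_sub_le hLip (by rw [hρ]; linarith) hη0.le x xhat).trans_eq
      (by rw [hρ]; ring)
  calc ∫ ω, ‖xplus ω - xhat‖ ^ 2 ∂μ ≤ ∫ ω, ‖u + ξ ω‖ ^ 2 ∂μ :=
        integral_mono_of_nonneg (.of_forall fun _ => by positivity)
          ((memLp_const u).add hξ).norm.integrable_sq
          (.of_forall fun ω => pow_le_pow_left₀ (norm_nonneg _) (hstep ω) 2)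
    _ = ‖u‖ ^ 2 + ∫ ω, ‖ξ ω‖ ^ 2 ∂μ := integral_norm_add_sq_of_integral_eq_zero hξ hξ0 u
    _ ≤ ((1 - 3 * (η * L)) * ‖x - xhat‖) ^ 2 + η ^ 2 * σ ^ 2 := by gcongr
    _ ≤ (1 - η * ρ) * ‖x - xhat‖ ^ 2 + σ ^ 2 * η ^ 2 := by
        have hgap : 0 ≤ η * L * (2 - 9 * (η * L)) * ‖x - xhat‖ ^ 2 :=
          mul_nonneg (mul_nonneg (mul_pos hη0 hL).le (by linarith)) (sq_nonneg _)
        rw [hρ]; nlinarith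

/-- Lemma A.2 (Lemma 3.4 in Davis--Drusvyatskiy): one-step contraction of the projected SGD
step towards the proximal point, in the smooth setting. -/
theorem psgd_one_step_contraction {d : ℕ}
    {Ω : Type} [MeasurableSpace Ω] (μ : Measure Ω) [IsProbabilityMeasure μ]
    (X : Set (EuclideanSpace ℝ (Fin d))) (hXne : X.Nonempty) (hXcl : IsClosed X) (hXcvx : Convex ℝ X)
    (F : EuclideanSpace ℝ (Fin d) → ℝ) (F' : EuclideanSpace ℝ (Fin d) → EuclideanSpace ℝ (Fin d)) (L ρ η σ : ℝ) (hL : 0 < L)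
    (hgrad : ∀ y, HasGradientAt F (F' y) y)
    (hLip : ∀ u v : EuclideanSpace ℝ (Fin d), ‖F' u - F' v‖ ≤ L * ‖u - v‖)
    (hρ : ρ = 4 * L) (hη0 : 0 < η) (hη : η ≤ 2 / (9 * L))
    (x : EuclideanSpace ℝ (Fin d)) (hx : x ∈ X)
    (g : Ω → EuclideanSpace ℝ (Fin d)) (hg2 : MemLp g 2 μ)
    (hmean : (∫ ω, g ω ∂μ) = F' x)
    (hvarg : (∫ ω, ‖g ω - F' x‖ ^ 2 ∂μ) ≤ σ ^ 2)
    (xplus : Ω → EuclideanSpace ℝ (Fin d)) (hxplus : ∀ ω, IsProjection X (x - η • g ω) (xplus ω))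
    (xhat : EuclideanSpace ℝ (Fin d)) (hxhat : IsProx X F ρ x xhat) :
    (∫ ω, ‖xplus ω - xhat‖ ^ 2 ∂μ) ≤ (1 - η * ρ) * ‖x - xhat‖ ^ 2 + σ ^ 2 * η ^ 2 :=
  psgd_one_step_contraction_general μ X hXcvx F F' L ρ η σ hL hgrad hLip hρ hη0 hη x g hg2 hmean
    hvarg xplus hxplus xhat hxhat
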